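/- arXiv:2006.01551 — 4 statements merged into one kernel-verified Lean document; each statement's English description precedes it below -/
import Mathlib

section
/- Let ω, Δt, ψ₁, ψ₂, M₁, M₂, ℓ be real numbers with ℓ > 0 and cos(ωΔt) ≠ 1, and let β ∈ ℂ. Let M be the 3×3 complex matrix with rows R1 = (1 − cos(βℓ), ψ₂(1 − cos(βℓ)), ψ₁(M₂cos(βℓ) + M₁)), R2 = (0, cos(ωΔt) − 1, (i/2)·sin(ωΔt)), R3 = (cos(ωΔt) − 1, 0, −(cos(ωΔt) + 1)/4). Then det M = 0 if and only if cos(βℓ)·(D₂ + F₁·i) = D₁ + F₁·i, where D₁ = −((cos(ωΔt)+1)/4 + ψ₁M₁(cos(ωΔt)−1)), D₂ = −(cos(ωΔt)+1)/4 + ψ₁M₂(cos(ωΔt)−1), and F₁ = ψ₂·sin(ωΔt)/2. -/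
open Complex Matrix

section NewmarkDispersion

variable {K : Type*} [Field K] (x c s ψ₁ ψ₂ M₁ M₂ i : K)

/-- With `x = cos(βℓ)`, `c = cos(ωΔt)`, `s = sin(ωΔt)` the second factor is the dispersion
relation; the identity does not use `i ^ 2 = -1`. -/
theorem det_newmark_eq_neg_mul :
    (Matrix.of ![![1 - x, ψ₂ * (1 - x), ψ₁ * (M₂ * x + M₁)],
        ![0, c - 1, i / 2 * s],
        ![c - 1, 0, -(c + 1) / 4]]).det =
      -(c - 1) * (x * ((-(c + 1) / 4 + ψ₁ * M₂ * (c - 1)) + ψ₂ * s / 2 * i) -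
        (-((c + 1) / 4 + ψ₁ * M₁ * (c - 1)) + ψ₂ * s / 2 * i)) := by
  rw [Matrix.det_fin_three]
  simp only [Matrix.of_apply, Matrix.cons_val', Matrix.cons_val_zero, Matrix.cons_val_one,
    Matrix.head_cons, Matrix.cons_val_two, Matrix.tail_cons]
  ring

theorem det_newmark_eq_zero_iff {c : K} (hc : c ≠ 1) :
    (Matrix.of ![![1 - x, ψ₂ * (1 - x), ψ₁ * (M₂ * x + M₁)],
        ![0, c - 1, i / 2 * s],
        ![c - 1, 0, -(c + 1) / 4]]).det = 0 ↔
      x * ((-(c + 1) / 4 + ψ₁ * M₂ * (c - 1)) + ψ₂ * s / 2 * i) =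
        -((c + 1) / 4 + ψ₁ * M₁ * (c - 1)) + ψ₂ * s / 2 * i := by
  rw [det_newmark_eq_neg_mul, mul_eq_zero, neg_eq_zero, sub_eq_zero, sub_eq_zero]
  exact or_iff_right hc

end NewmarkDispersion

theorem discrete_system_det_eq_zero_iff_general
    (ω Δt ψ₁ ψ₂ M₁ M₂ ℓ : ℝ) (hcos : Real.cos (ω * Δt) ≠ 1) (β : ℂ) :
    let M : Matrix (Fin 3) (Fin 3) ℂ :=
      Matrix.of
        ![![1 - Complex.cos (β * ℓ), (ψ₂ : ℂ) * (1 - Complex.cos (β * ℓ)),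
            (ψ₁ : ℂ) * ((M₂ : ℂ) * Complex.cos (β * ℓ) + (M₁ : ℂ))],
          ![0, (Real.cos (ω * Δt) : ℂ) - 1, (I / 2) * (Real.sin (ω * Δt) : ℂ)],
          ![(Real.cos (ω * Δt) : ℂ) - 1, 0, -((Real.cos (ω * Δt) : ℂ) + 1) / 4]]
    let D₁ : ℝ := -((Real.cos (ω * Δt) + 1) / 4 + ψ₁ * M₁ * (Real.cos (ω * Δt) - 1))
    let D₂ : ℝ := -(Real.cos (ω * Δt) + 1) / 4 + ψ₁ * M₂ * (Real.cos (ω * Δt) - 1)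
    let F₁ : ℝ := ψ₂ * Real.sin (ω * Δt) / 2
    M.det = 0 ↔
      Complex.cos (β * ℓ) * ((D₂ : ℂ) + (F₁ : ℂ) * I) = (D₁ : ℂ) + (F₁ : ℂ) * I := by
  intro M D₁ D₂ F₁
  have hc : (Real.cos (ω * Δt) : ℂ) ≠ 1 := mod_cast hcos
  simp only [M, D₁, D₂, F₁]
  push_cast at hc ⊢
  exact det_newmark_eq_zero_iff _ _ _ _ _ _ _ hc

/-- For `cos(ωΔt) ≠ 1`, the determinant of the coefficient matrix of the
fully-discrete finite-element/Newmark system vanishes if and only if the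
numerical dispersion relation `cos(βℓ)(D₂ + F₁i) = D₁ + F₁i` holds. -/
theorem discrete_system_det_eq_zero_iff
    (ω Δt ψ₁ ψ₂ M₁ M₂ ℓ : ℝ) (hℓ : 0 < ℓ) (hcos : Real.cos (ω * Δt) ≠ 1) (β : ℂ) :
    let M : Matrix (Fin 3) (Fin 3) ℂ :=
      Matrix.of
        ![![1 - Complex.cos (β * ℓ), (ψ₂ : ℂ) * (1 - Complex.cos (β * ℓ)),
            (ψ₁ : ℂ) * ((M₂ : ℂ) * Complex.cos (β * ℓ) + (M₁ : ℂ))],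
          ![0, (Real.cos (ω * Δt) : ℂ) - 1, (I / 2) * (Real.sin (ω * Δt) : ℂ)],
          ![(Real.cos (ω * Δt) : ℂ) - 1, 0, -((Real.cos (ω * Δt) : ℂ) + 1) / 4]]
    let D₁ : ℝ := -((Real.cos (ω * Δt) + 1) / 4 + ψ₁ * M₁ * (Real.cos (ω * Δt) - 1))
    let D₂ : ℝ := -(Real.cos (ω * Δt) + 1) / 4 + ψ₁ * M₂ * (Real.cos (ω * Δt) - 1)
    let F₁ : ℝ := ψ₂ * Real.sin (ω * Δt) / 2
    M.det = 0 ↔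
      Complex.cos (β * ℓ) * ((D₂ : ℂ) + (F₁ : ℂ) * I) = (D₁ : ℂ) + (F₁ : ℂ) * I :=
  discrete_system_det_eq_zero_iff_general ω Δt ψ₁ ψ₂ M₁ M₂ ℓ hcos β
end

section
/- Let ω, Δt, ψ₁, ψ₂, M₁, M₂, ℓ be real numbers with ℓ > 0 and cos(ωΔt) ≠ −1, and let β ∈ ℂ satisfy cos(βℓ)·(D₂ + F₁·i) = D₁ + F₁·i, where D₁ = −((cos(ωΔt)+1)/4 + ψ₁M₁(cos(ωΔt)−1)), D₂ = −(cos(ωΔt)+1)/4 + ψ₁M₂(cos(ωΔt)−1), F₁ = ψ₂·sin(ωΔt)/2. Let M be the 3×3 complex matrix with rows R1 = (1 − cos(βℓ), ψ₂(1 − cos(βℓ)), ψ₁(M₂cos(βℓ) + M₁)), R2 = (0, cos(ωΔt) − 1, (i/2)·sin(ωΔt)), R3 = (cos(ωΔt) − 1, 0, −(cos(ωΔt) + 1)/4). Then the vector (1, −2i·sin(ωΔt)/(cos(ωΔt) + 1), 4(cos(ωΔt) − 1)/(cos(ωΔt) + 1)) lies in the kernel of M, i.e. M applied to this vector is zero.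 -/
/-!
Write `c = cos(ωΔt)`, `s = sin(ωΔt)`, `κ = cos(βℓ)`. The two Newmark rows of `M` fix the ratios
`B/A = -2is/(c+1)` and `C/A = 4(c-1)/(c+1)`, so the proposed vector annihilates them identically.
Substituting these ratios into the nodal equilibrium row and multiplying by `(c+1)/4` gives
exactly the dispersion relation, which is why that row vanishes too.
-/

open Complex Matrix

theorem newmark_first_row_eq_zero_iff {c s κ ψ₁ ψ₂ M₁ M₂ : ℂ} (hc : c + 1 ≠ 0) :
    (1 - κ) + ψ₂ * (1 - κ) * (-2 * I * s / (c + 1)) + ψ₁ * (M₂ * κ + M₁) * (4 * (c - 1) / (c + 1))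
        = 0 ↔
      κ * (-(c + 1) / 4 + ψ₁ * M₂ * (c - 1) + ψ₂ * s / 2 * I)
        = -((c + 1) / 4 + ψ₁ * M₁ * (c - 1)) + ψ₂ * s / 2 * I := by
  have hrow : (1 - κ) + ψ₂ * (1 - κ) * (-2 * I * s / (c + 1))
      + ψ₁ * (M₂ * κ + M₁) * (4 * (c - 1) / (c + 1))
        = 4 / (c + 1) * (κ * (-(c + 1) / 4 + ψ₁ * M₂ * (c - 1) + ψ₂ * s / 2 * I)
          - (-((c + 1) / 4 + ψ₁ * M₁ * (c - 1)) + ψ₂ * s / 2 * I)) := by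
    field_simp
    ring
  rw [hrow, mul_eq_zero, sub_eq_zero]
  exact or_iff_right (div_ne_zero (by norm_num) hc)

theorem newmark_velocity_row_eq_zero (c s : ℂ) :
    (c - 1) * (-2 * I * s / (c + 1)) + I / 2 * s * (4 * (c - 1) / (c + 1)) = 0 := by
  ring

theorem newmark_acceleration_row_eq_zero {c : ℂ} (hc : c + 1 ≠ 0) :
    (c - 1) - (c + 1) / 4 * (4 * (c - 1) / (c + 1)) = 0 := by
  field_simp
  ring

theorem discrete_system_eigenvector_general
    (ω Δt ψ₁ ψ₂ M₁ M₂ ℓ : ℝ) (hcos : Real.cos (ω * Δt) ≠ -1) (β : ℂ)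
    (hdisp :
      Complex.cos (β * ℓ)
          * (((-(Real.cos (ω * Δt) + 1) / 4 + ψ₁ * M₂ * (Real.cos (ω * Δt) - 1) : ℝ) : ℂ)
              + ((ψ₂ * Real.sin (ω * Δt) / 2 : ℝ) : ℂ) * I)
        = ((-((Real.cos (ω * Δt) + 1) / 4 + ψ₁ * M₁ * (Real.cos (ω * Δt) - 1)) : ℝ) : ℂ)
            + ((ψ₂ * Real.sin (ω * Δt) / 2 : ℝ) : ℂ) * I) :
    let M : Matrix (Fin 3) (Fin 3) ℂ :=
      Matrix.of
        ![![1 - Complex.cos (β * ℓ), (ψ₂ : ℂ) * (1 - Complex.cos (β * ℓ)),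
            (ψ₁ : ℂ) * ((M₂ : ℂ) * Complex.cos (β * ℓ) + (M₁ : ℂ))],
          ![0, (Real.cos (ω * Δt) : ℂ) - 1, (I / 2) * (Real.sin (ω * Δt) : ℂ)],
          ![(Real.cos (ω * Δt) : ℂ) - 1, 0, -((Real.cos (ω * Δt) : ℂ) + 1) / 4]]
    M.mulVec
        ![1, -2 * I * (Real.sin (ω * Δt) : ℂ) / ((Real.cos (ω * Δt) : ℂ) + 1),
          4 * ((Real.cos (ω * Δt) : ℂ) - 1) / ((Real.cos (ω * Δt) : ℂ) + 1)]
      = 0 := by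
  intro M
  have hc : (Real.cos (ω * Δt) : ℂ) + 1 ≠ 0 := by
    exact_mod_cast fun h => hcos (eq_neg_of_add_eq_zero_left h)
  push_cast [-ofReal_cos, -ofReal_sin] at hdisp
  ext j
  fin_cases j <;> simp [M, mulVec, dotProduct, Fin.sum_univ_three, -ofReal_cos, -ofReal_sin]
  · linear_combination (newmark_first_row_eq_zero_iff hc).2 hdisp
  · linear_combination newmark_velocity_row_eq_zero (Real.cos (ω * Δt) : ℂ) (Real.sin (ω * Δt))
  · linear_combination newmark_acceleration_row_eq_zero hc

/-- If the numerical dispersion relation `cos(βℓ)(D₂ + F₁i) = D₁ + F₁i` holds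
and `cos(ωΔt) ≠ −1`, then the vector
`(1, −2i·sin(ωΔt)/(cos(ωΔt)+1), 4(cos(ωΔt)−1)/(cos(ωΔt)+1))` lies in the
kernel of the coefficient matrix `M` of the fully-discrete system. -/
theorem discrete_system_eigenvector
    (ω Δt ψ₁ ψ₂ M₁ M₂ ℓ : ℝ) (hℓ : 0 < ℓ) (hcos : Real.cos (ω * Δt) ≠ -1) (β : ℂ)
    (hdisp :
      Complex.cos (β * ℓ)
          * (((-(Real.cos (ω * Δt) + 1) / 4 + ψ₁ * M₂ * (Real.cos (ω * Δt) - 1) : ℝ) : ℂ)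
              + ((ψ₂ * Real.sin (ω * Δt) / 2 : ℝ) : ℂ) * I)
        = ((-((Real.cos (ω * Δt) + 1) / 4 + ψ₁ * M₁ * (Real.cos (ω * Δt) - 1)) : ℝ) : ℂ)
            + ((ψ₂ * Real.sin (ω * Δt) / 2 : ℝ) : ℂ) * I) :
    let M : Matrix (Fin 3) (Fin 3) ℂ :=
      Matrix.of
        ![![1 - Complex.cos (β * ℓ), (ψ₂ : ℂ) * (1 - Complex.cos (β * ℓ)),
            (ψ₁ : ℂ) * ((M₂ : ℂ) * Complex.cos (β * ℓ) + (M₁ : ℂ))],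
          ![0, (Real.cos (ω * Δt) : ℂ) - 1, (I / 2) * (Real.sin (ω * Δt) : ℂ)],
          ![(Real.cos (ω * Δt) : ℂ) - 1, 0, -((Real.cos (ω * Δt) : ℂ) + 1) / 4]]
    M.mulVec
        ![1, -2 * I * (Real.sin (ω * Δt) : ℂ) / ((Real.cos (ω * Δt) : ℂ) + 1),
          4 * ((Real.cos (ω * Δt) : ℂ) - 1) / ((Real.cos (ω * Δt) : ℂ) + 1)]
      = 0 :=
  discrete_system_eigenvector_general ω Δt ψ₁ ψ₂ M₁ M₂ ℓ hcos β hdisp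
end

section
/- Let ω, Δt, ℓ, ψ₁, ψ₂, M₁, M₂ be real with Δt > 0, ℓ > 0 and cos(ωΔt) ≠ −1, and let β ∈ ℂ. For j, k ∈ ℤ define u_{j,k} = exp(i(βjℓ − ωkΔt)), V_{j,k} = (−2i·sin(ωΔt)/(cos(ωΔt)+1))·u_{j,k}, and W_{j,k} = (4(cos(ωΔt)−1)/(cos(ωΔt)+1))·u_{j,k}. Then the discrete nodal equilibrium equation (−u_{j−1,k} + 2u_{j,k} − u_{j+1,k}) + ψ₂(−V_{j−1,k} + 2V_{j,k} − V_{j+1,k}) + ψ₁(M₂W_{j−1,k} + 2M₁W_{j,k} + M₂W_{j+1,k}) = 0 holds for all j, k ∈ ℤ if and only if cos(βℓ)·(D₂ + F₁·i) = D₁ + F₁·i, where D₁ = −((cos(ωΔt)+1)/4 + ψ₁M₁(cos(ωΔt)−1)), D₂ = −(cos(ωΔt)+1)/4 + ψ₁M₂(cos(ωΔt)−1), F₁ = ψ₂·sin(ωΔt)/2. -/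
open Complex

/-!
Along the mesh the plane wave `u_{j,k}` is multiplied by `exp(iβℓ)` per node, so its two
neighbours add up to `2 cos(βℓ) u_{j,k}`. The three-point stencil therefore acts on `u`, `V`, `W`
as multiplication by one symbol in `cos(βℓ)`; clearing the Newmark denominator `cos(ωΔt) + 1`,
that symbol is `(4 / (cos(ωΔt) + 1)) (cos(βℓ)(D₂ + F₁i) − (D₁ + F₁i))`. Since `u_{j,k}` never
vanishes, the equation at every node is equivalent to the dispersion relation.
-/

theorem Complex.exp_I_mul_sub_add_exp_I_mul_add (x y : ℂ) :
    exp (I * (x - y)) + exp (I * (x + y)) = 2 * cos y * exp (I * x) := by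
  rw [Complex.cos, mul_sub, mul_add, exp_sub, exp_add, neg_mul, exp_neg, mul_comm y I]
  field_simp
  ring

theorem symmetric_stencil_eq_of_add_eq {R : Type*} [CommRing R]
    (a b ψ₁ ψ₂ M₁ M₂ C U Um Up : R) (h : Um + Up = 2 * C * U) :
    (-Um + 2 * U - Up) + ψ₂ * (-(a * Um) + 2 * (a * U) - a * Up)
        + ψ₁ * (M₂ * (b * Um) + 2 * M₁ * (b * U) + M₂ * (b * Up))
      = 2 * U * ((1 - C) * (1 + ψ₂ * a) + ψ₁ * b * (M₁ + M₂ * C)) := by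
  linear_combination (-(1 + ψ₂ * a) + ψ₁ * b * M₂) * h

theorem newmark_symbol_eq (c s ψ₁ ψ₂ M₁ M₂ : ℝ) (C : ℂ) (hc : (c : ℂ) + 1 ≠ 0) :
    (1 - C) * (1 + (ψ₂ : ℂ) * (-2 * I * (s : ℂ) / ((c : ℂ) + 1)))
        + (ψ₁ : ℂ) * (4 * ((c : ℂ) - 1) / ((c : ℂ) + 1)) * ((M₁ : ℂ) + (M₂ : ℂ) * C)
      = 4 / ((c : ℂ) + 1)
          * (C * (((-(c + 1) / 4 + ψ₁ * M₂ * (c - 1) : ℝ) : ℂ) + ((ψ₂ * s / 2 : ℝ) : ℂ) * I)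
            - ((((-((c + 1) / 4 + ψ₁ * M₁ * (c - 1))) : ℝ) : ℂ) + ((ψ₂ * s / 2 : ℝ) : ℂ) * I)) := by
  push_cast
  field_simp
  ring

theorem discrete_nodal_equilibrium_iff_dispersion_general
    (ω Δt ℓ ψ₁ ψ₂ M₁ M₂ : ℝ)
    (hcos : Real.cos (ω * Δt) ≠ -1) (β : ℂ)
    (u V W : ℤ → ℤ → ℂ)
    (hu : ∀ j k : ℤ, u j k = Complex.exp (I * (β * j * ℓ - ω * k * Δt)))
    (hV : ∀ j k : ℤ, V j k
      = (-2 * I * (Real.sin (ω * Δt) : ℂ) / ((Real.cos (ω * Δt) : ℂ) + 1)) * u j k)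
    (hW : ∀ j k : ℤ, W j k
      = (4 * ((Real.cos (ω * Δt) : ℂ) - 1) / ((Real.cos (ω * Δt) : ℂ) + 1)) * u j k) :
    (∀ j k : ℤ,
        (-u (j - 1) k + 2 * u j k - u (j + 1) k)
          + (ψ₂ : ℂ) * (-V (j - 1) k + 2 * V j k - V (j + 1) k)
          + (ψ₁ : ℂ) * ((M₂ : ℂ) * W (j - 1) k + 2 * (M₁ : ℂ) * W j k
              + (M₂ : ℂ) * W (j + 1) k) = 0)
      ↔
    Complex.cos (β * ℓ)
        * (((-(Real.cos (ω * Δt) + 1) / 4 + ψ₁ * M₂ * (Real.cos (ω * Δt) - 1) : ℝ) : ℂ)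
            + ((ψ₂ * Real.sin (ω * Δt) / 2 : ℝ) : ℂ) * I)
      = ((-((Real.cos (ω * Δt) + 1) / 4 + ψ₁ * M₁ * (Real.cos (ω * Δt) - 1)) : ℝ) : ℂ)
          + ((ψ₂ * Real.sin (ω * Δt) / 2 : ℝ) : ℂ) * I := by
  have hc : (Real.cos (ω * Δt) : ℂ) + 1 ≠ 0 := by
    rw [Ne, add_eq_zero_iff_eq_neg]
    exact_mod_cast hcos
  have hneighbours : ∀ j k : ℤ, u (j - 1) k + u (j + 1) k = 2 * Complex.cos (β * ℓ) * u j k := by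
    intro j k
    rw [hu, hu, hu, ← exp_I_mul_sub_add_exp_I_mul_add]
    push_cast
    ring_nf
  refine (forall₂_congr fun j k ↦ ?_).trans (forall_const ℤ |>.trans (forall_const ℤ))
  rw [hV, hV, hV, hW, hW, hW, symmetric_stencil_eq_of_add_eq _ _ _ _ _ _ _ _ _ _ (hneighbours j k),
    newmark_symbol_eq _ _ _ _ _ _ _ hc]
  have hu0 : u j k ≠ 0 := by rw [hu]; exact exp_ne_zero _
  simp only [mul_eq_zero, hu0, div_eq_zero_iff, OfNat.ofNat_ne_zero, hc, sub_eq_zero,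
    or_self, false_or]

/-- Dispersion theorem for the fully discrete viscoelastic wave: with the
discrete plane-wave ansatz `u_{j,k} = e^{i(βjℓ − ωkΔt)}` and the Newmark
eigen-vector scalings `V_{j,k} = (−2i·sin(ωΔt)/(cos(ωΔt)+1))·u_{j,k}`,
`W_{j,k} = (4(cos(ωΔt)−1)/(cos(ωΔt)+1))·u_{j,k}`, the discrete nodal
equilibrium equation holds for all `j, k ∈ ℤ` if and only if
`cos(βℓ)(D₂ + F₁i) = D₁ + F₁i`. -/
theorem discrete_nodal_equilibrium_iff_dispersion
    (ω Δt ℓ ψ₁ ψ₂ M₁ M₂ : ℝ) (hΔt : 0 < Δt) (hℓ : 0 < ℓ)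
    (hcos : Real.cos (ω * Δt) ≠ -1) (β : ℂ)
    (u V W : ℤ → ℤ → ℂ)
    (hu : ∀ j k : ℤ, u j k = Complex.exp (I * (β * j * ℓ - ω * k * Δt)))
    (hV : ∀ j k : ℤ, V j k
      = (-2 * I * (Real.sin (ω * Δt) : ℂ) / ((Real.cos (ω * Δt) : ℂ) + 1)) * u j k)
    (hW : ∀ j k : ℤ, W j k
      = (4 * ((Real.cos (ω * Δt) : ℂ) - 1) / ((Real.cos (ω * Δt) : ℂ) + 1)) * u j k) :
    (∀ j k : ℤ,
        (-u (j - 1) k + 2 * u j k - u (j + 1) k)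
          + (ψ₂ : ℂ) * (-V (j - 1) k + 2 * V j k - V (j + 1) k)
          + (ψ₁ : ℂ) * ((M₂ : ℂ) * W (j - 1) k + 2 * (M₁ : ℂ) * W j k
              + (M₂ : ℂ) * W (j + 1) k) = 0)
      ↔
    Complex.cos (β * ℓ)
        * (((-(Real.cos (ω * Δt) + 1) / 4 + ψ₁ * M₂ * (Real.cos (ω * Δt) - 1) : ℝ) : ℂ)
            + ((ψ₂ * Real.sin (ω * Δt) / 2 : ℝ) : ℂ) * I)
      = ((-((Real.cos (ω * Δt) + 1) / 4 + ψ₁ * M₁ * (Real.cos (ω * Δt) - 1)) : ℝ) : ℂ)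
          + ((ψ₂ * Real.sin (ω * Δt) / 2 : ℝ) : ℂ) * I :=
  discrete_nodal_equilibrium_iff_dispersion_general ω Δt ℓ ψ₁ ψ₂ M₁ M₂ hcos β u V W hu hV hW
end

section
/- Let d, h, D, F be real numbers such that the complex cosine satisfies cos(d + h·i) = D + F·i. Then cosh²(h) = (1 + D² + F² + √((1 + D² + F²)² − 4D²))/2 and cos²(d) = (1 + D² + F² − √((1 + D² + F²)² − 4D²))/2. -/
/-!
Writing `cos (d + h i) = cos d cosh h - i sin d sinh h` and using `sin² = 1 - cos²`,
`sinh² = cosh² - 1`, the squares `a = cos² d` and `b = cosh² h` have sum `1 + D² + F²` and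
product `D²`. They are therefore the two roots of `t² - (1 + D² + F²) t + D²`, and `a ≤ 1 ≤ b`
decides which root is which.
-/

open Complex

theorem eq_quadratic_roots_of_le {a b : ℝ} (hab : a ≤ b) :
    b = (a + b + √((a + b) ^ 2 - 4 * (a * b))) / 2 ∧
      a = (a + b - √((a + b) ^ 2 - 4 * (a * b))) / 2 := by
  have hdisc : √((a + b) ^ 2 - 4 * (a * b)) = b - a := by
    rw [show (a + b) ^ 2 - 4 * (a * b) = (b - a) ^ 2 by ring, Real.sqrt_sq (by linarith)]
  rw [hdisc]
  constructor <;> ring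

theorem Real.cos_sq_le_cosh_sq (x y : ℝ) : Real.cos x ^ 2 ≤ Real.cosh y ^ 2 :=
  (Real.cos_sq_le_one x).trans (one_le_pow₀ (Real.one_le_cosh y))

namespace Complex

theorem cos_add_mul_I_re (x y : ℝ) : (cos (x + y * I)).re = Real.cos x * Real.cosh y := by
  simp [cos_add_mul_I, ← ofReal_cos, ← ofReal_cosh, ← ofReal_sin, ← ofReal_sinh]

theorem cos_add_mul_I_im (x y : ℝ) : (cos (x + y * I)).im = -(Real.sin x * Real.sinh y) := by
  simp [cos_add_mul_I, ← ofReal_cos, ← ofReal_cosh, ← ofReal_sin, ← ofReal_sinh]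

theorem cos_sq_add_cosh_sq (x y : ℝ) :
    Real.cos x ^ 2 + Real.cosh y ^ 2 = 1 + (cos (x + y * I)).re ^ 2 + (cos (x + y * I)).im ^ 2 := by
  rw [cos_add_mul_I_re, cos_add_mul_I_im]
  linear_combination -Real.sinh y ^ 2 * Real.sin_sq_add_cos_sq x
    + (1 - Real.cos x ^ 2) * Real.cosh_sq_sub_sinh_sq y

end Complex

/-- If the complex cosine satisfies `cos(d + hi) = D + Fi` for real `d, h, D, F`,
then `cosh²h` is the larger and `cos²d` the smaller root of the quadratic
`t² − (1 + D² + F²)t + D² = 0`. -/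
theorem complex_cos_dispersion_roots
    (d h D F : ℝ)
    (hc : Complex.cos ((d : ℂ) + (h : ℂ) * I) = (D : ℂ) + (F : ℂ) * I) :
    Real.cosh h ^ 2
        = (1 + D ^ 2 + F ^ 2 + Real.sqrt ((1 + D ^ 2 + F ^ 2) ^ 2 - 4 * D ^ 2)) / 2
    ∧ Real.cos d ^ 2
        = (1 + D ^ 2 + F ^ 2 - Real.sqrt ((1 + D ^ 2 + F ^ 2) ^ 2 - 4 * D ^ 2)) / 2 := by
  have hre : (cos (d + h * I)).re = D := by simp [hc]
  have him : (cos (d + h * I)).im = F := by simp [hc]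
  rw [← hre, ← him, ← cos_sq_add_cosh_sq, cos_add_mul_I_re, mul_pow]
  exact eq_quadratic_roots_of_le (Real.cos_sq_le_cosh_sq d h)
end
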